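/- arXiv:2001.00112 — 4 statements merged into one kernel-verified Lean document; each statement's English description precedes it below -/
import Mathlib

section
/- Let C > 0 and D ≥ 0. Let A : ℝ → ℝ be a cumulative arrival process and B a cumulative service process for A with rate C. If the system has bounded delay D (B (t + D) ≥ A t for every t), then the input is admissible: for all s ≤ t, A t - A s ≤ C * (t - s) + C * D; in particular A t ≤ C * (t + D) for every t ≥ 0. (Paper's Corollary 1: if the network has a bounded delay, the input traffic must be admissible.) -/
theorem arrival_sub_le_of_bounded_delay {A B : ℝ → ℝ} {C D : ℝ} (hD : 0 ≤ D)
    (hBA : ∀ t, B t ≤ A t) (hBrate : ∀ s t, s ≤ t → B t - B s ≤ C * (t - s))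
    (hdelay : ∀ t, A t ≤ B (t + D)) {s t : ℝ} (hst : s ≤ t) :
    A t - A s ≤ C * (t - s) + C * D :=
  calc A t - A s ≤ B (t + D) - B s := by linarith [hdelay t, hBA s]
    _ ≤ C * (t + D - s) := hBrate s (t + D) (by linarith)
    _ = C * (t - s) + C * D := by ring

theorem bounded_delay_implies_admissible_general
    (C D : ℝ) (hD : 0 ≤ D)
    (A B : ℝ → ℝ)
    (hA0 : ∀ t ≤ (0 : ℝ), A t = 0)
    (hBA : ∀ t, B t ≤ A t)
    (hBrate : ∀ s t, s ≤ t → B t - B s ≤ C * (t - s))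
    (hdelay : ∀ t, A t ≤ B (t + D)) :
    (∀ s t, s ≤ t → A t - A s ≤ C * (t - s) + C * D) ∧
    (∀ t, 0 ≤ t → A t ≤ C * (t + D)) := by
  have admissible : ∀ s t, s ≤ t → A t - A s ≤ C * (t - s) + C * D :=
    fun _ _ hst => arrival_sub_le_of_bounded_delay hD hBA hBrate hdelay hst
  refine ⟨admissible, fun t ht => ?_⟩
  have from_zero := admissible 0 t ht
  rw [hA0 0 le_rfl] at from_zero
  linarith

/-- Paper's Corollary 1: if the system has bounded delay `D`, then the input
traffic is admissible: `A t - A s ≤ C * (t - s) + C * D` for all `s ≤ t`,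
and in particular `A t ≤ C * (t + D)` for every `t ≥ 0`. -/
theorem bounded_delay_implies_admissible
    (C D : ℝ) (hC : 0 < C) (hD : 0 ≤ D)
    (A B : ℝ → ℝ)
    (hAmono : Monotone A) (hA0 : ∀ t ≤ (0 : ℝ), A t = 0)
    (hBmono : Monotone B)
    (hBA : ∀ t, B t ≤ A t)
    (hBrate : ∀ s t, s ≤ t → B t - B s ≤ C * (t - s))
    (hdelay : ∀ t, A t ≤ B (t + D)) :
    (∀ s t, s ≤ t → A t - A s ≤ C * (t - s) + C * D) ∧
    (∀ t, 0 ≤ t → A t ≤ C * (t + D)) :=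
  bounded_delay_implies_admissible_general C D hD A B hA0 hBA hBrate hdelay
end

section
/- Let C > 0 and D ≥ 0. Let A : ℝ → ℝ be a cumulative arrival process and B a work-conserving cumulative service process for A with rate C. If for every time t the in-volume over the window [t, t+D) is bounded by D * C, i.e. A (t + D) - B t ≤ D * C for every t, then the system has bounded delay D: B (t + D) ≥ A t for every t. (Paper's Theorem 2, sufficient condition: a work-conserving network with InVolume(t, D) ≤ D × C for all t has bounded delay D.) -/
/-! If some bit arrived by `t` were still unserved at `t + D`, the queue would be backlogged on
all of `[t, t + D)`, so work conservation would serve exactly `D * C` there; the in-volume bound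
then gives `A t ≤ A (t + D) ≤ B (t + D)`, a contradiction. -/

theorem lt_on_Ico_of_lt_of_monotone {A B : ℝ → ℝ} (hA : Monotone A) (hB : Monotone B)
    {s t : ℝ} (h : B t < A s) : ∀ u, s ≤ u → u < t → B u < A u :=
  fun _ hsu hut => (hB hut.le).trans_lt (h.trans_le (hA hsu))

theorem invol_bound_implies_bounded_delay_general
    (C D : ℝ) (hD : 0 ≤ D)
    (A B : ℝ → ℝ)
    (hAmono : Monotone A)
    (hBmono : Monotone B)
    (hWC : ∀ s t, s ≤ t → (∀ u, s ≤ u → u < t → B u < A u) →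
      B t - B s = C * (t - s))
    (hinvol : ∀ t, A (t + D) - B t ≤ D * C) :
    ∀ t, A t ≤ B (t + D) := by
  intro t
  by_contra! hlate
  have hwindow : t ≤ t + D := le_add_of_nonneg_right hD
  have hserved : B (t + D) - B t = C * (t + D - t) :=
    hWC t (t + D) hwindow (lt_on_Ico_of_lt_of_monotone hAmono hBmono hlate)
  have harrived : A t ≤ A (t + D) := hAmono hwindow
  linarith [hinvol t]

/-- Paper's Theorem 2 (sufficient condition): if the system is work-conserving
and `InVolume(t, D) = A (t + D) - B t ≤ D * C` for every `t`, then the system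
has bounded delay `D`. -/
theorem invol_bound_implies_bounded_delay
    (C D : ℝ) (hC : 0 < C) (hD : 0 ≤ D)
    (A B : ℝ → ℝ)
    (hAmono : Monotone A) (hA0 : ∀ t ≤ (0 : ℝ), A t = 0)
    (hBmono : Monotone B)
    (hBA : ∀ t, B t ≤ A t)
    (hBrate : ∀ s t, s ≤ t → B t - B s ≤ C * (t - s))
    (hWC : ∀ s t, s ≤ t → (∀ u, s ≤ u → u < t → B u < A u) →
      B t - B s = C * (t - s))
    (hinvol : ∀ t, A (t + D) - B t ≤ D * C) :
    ∀ t, A t ≤ B (t + D) :=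
  invol_bound_implies_bounded_delay_general C D hD A B hAmono hBmono hWC hinvol
end

section
/- Let K be a positive integer and for each class i ∈ {1, …, K} let A i : ℝ → ℝ be nondecreasing, let d i > 0 and C i ≥ 0, and suppose the class-i traffic is shaped so that A i (t + d i) - A i t ≤ C i * d i for every t. Fix k ∈ {1, …, K} and suppose that for every i ≤ k the ratio d k / d i is a positive integer. Then for every t, the aggregate in-volume of classes 1 through k over any window of length d k satisfies ∑_{i=1}^{k} (A i (t + d k) - A i t) ≤ d k * ∑_{i=1}^{k} C i. (The key aggregate in-volume inequality established in the proof of the paper's Theorem 4.) -/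
/-! A window of length `d k` is tiled by `d k / d i` consecutive windows of length `d i`, so
telescoping the shaping bound bounds each class separately by `d k * C i`; summing over the
classes gives the aggregate bound. -/

theorem sub_le_nat_mul_of_forall_add_sub_le {A : ℝ → ℝ} {δ c : ℝ}
    (h : ∀ t, A (t + δ) - A t ≤ c) (m : ℕ) (t : ℝ) :
    A (t + m * δ) - A t ≤ m * c := by
  induction m with
  | zero => simp
  | succ n ih =>
    have hstep := h (t + n * δ)
    rw [add_assoc, ← add_one_mul] at hstep
    push_cast
    linarith

theorem sub_le_mul_of_window_eq_nat_mul {A : ℝ → ℝ} {δ C D : ℝ}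
    (hshape : ∀ t, A (t + δ) - A t ≤ C * δ) {m : ℕ} (hD : D = m * δ) (t : ℝ) :
    A (t + D) - A t ≤ D * C := by
  calc A (t + D) - A t ≤ m * (C * δ) := hD ▸ sub_le_nat_mul_of_forall_add_sub_le hshape m t
    _ = D * C := by rw [hD]; ring

theorem aggregate_invol_bound_general
    (K : ℕ)
    (A : ℕ → ℝ → ℝ) (d Cb : ℕ → ℝ)
    (hd : ∀ i ∈ Finset.Icc 1 K, 0 < d i)
    (hshape : ∀ i ∈ Finset.Icc 1 K, ∀ t, A i (t + d i) - A i t ≤ Cb i * d i)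
    (k : ℕ) (hk : k ∈ Finset.Icc 1 K)
    (hratio : ∀ i ∈ Finset.Icc 1 k, ∃ m : ℕ, 0 < m ∧ d k / d i = (m : ℝ)) :
    ∀ t, ∑ i ∈ Finset.Icc 1 k, (A i (t + d k) - A i t) ≤
      d k * ∑ i ∈ Finset.Icc 1 k, Cb i := by
  intro t
  rw [Finset.mul_sum]
  refine Finset.sum_le_sum fun i hi => ?_
  have hiK : i ∈ Finset.Icc 1 K := Finset.Icc_subset_Icc_right (Finset.mem_Icc.mp hk).2 hi
  obtain ⟨m, -, hm⟩ := hratio i hi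
  have hdk : d k = m * d i := (div_eq_iff (hd i hiK).ne').mp hm
  exact sub_le_mul_of_window_eq_nat_mul (hshape i hiK) hdk t

/-- The key aggregate in-volume inequality from the proof of the paper's
Theorem 4: if each class `i` is shaped to `C i * d i` bits per window of
length `d i`, and `d k / d i` is a positive integer for every `i ≤ k`, then
the aggregate in-volume of classes `1..k` over any window of length `d k`
is at most `d k * ∑_{i=1}^{k} C i`. -/
theorem aggregate_invol_bound
    (K : ℕ) (hK : 0 < K)
    (A : ℕ → ℝ → ℝ) (d Cb : ℕ → ℝ)
    (hAmono : ∀ i ∈ Finset.Icc 1 K, Monotone (A i))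
    (hd : ∀ i ∈ Finset.Icc 1 K, 0 < d i)
    (hCb : ∀ i ∈ Finset.Icc 1 K, 0 ≤ Cb i)
    (hshape : ∀ i ∈ Finset.Icc 1 K, ∀ t, A i (t + d i) - A i t ≤ Cb i * d i)
    (k : ℕ) (hk : k ∈ Finset.Icc 1 K)
    (hratio : ∀ i ∈ Finset.Icc 1 k, ∃ m : ℕ, 0 < m ∧ d k / d i = (m : ℝ)) :
    ∀ t, ∑ i ∈ Finset.Icc 1 k, (A i (t + d k) - A i t) ≤
      d k * ∑ i ∈ Finset.Icc 1 k, Cb i :=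
  aggregate_invol_bound_general K A d Cb hd hshape k hk hratio
end

section
/- Let σ > 0 and D > 0. Consider a Quantum shaper with bucket size σ and delay parameter D, and let (t 1, s 1), …, (t n, s n) be the release events it produces, with nondecreasing release times t 1 ≤ t 2 ≤ … ≤ t n and sizes s j > 0, subject to the credit rule: event j may be released only if its size does not exceed the available credit at time t j, i.e. s j + ∑_{i < j, t i > t j - D} s i ≤ σ (credits consumed at time t i are replenished exactly at time t i + D, starting from a full bucket of σ credits). Then for every time t, the total bits released in any window of length D is bounded by σ: ∑_{j : t - D < t j ≤ t} s j ≤ σ. (The defining guarantee of the paper's Quantum shaper: the shaped flow's total bits during any arbitrary time window of size D are bounded by σ.) -/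
/-!
Let `j` be the latest-indexed event of the window `(τ - D, τ]`. Every other event `i` of the
window comes before `j` and satisfies `t j - D ≤ τ - D < t i`, so its credit has not yet been
replenished when `j` is released. Hence the window's total is at most `s j` plus the unreplenished
credit at `j`, which the credit rule bounds by `σ`.
-/

open Finset

namespace QuantumShaper

variable {ι : Type*} [Fintype ι] [LinearOrder ι] (D : ℝ) (t : ι → ℝ)

noncomputable def window (τ : ℝ) : Finset ι :=
  univ.filter fun j => τ - D < t j ∧ t j ≤ τ

noncomputable def unreplenished (j : ι) : Finset ι :=
  univ.filter fun i => i < j ∧ t j - D < t i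

theorem erase_max'_window_subset_unreplenished {τ : ℝ} (h : (window D t τ).Nonempty) :
    (window D t τ).erase ((window D t τ).max' h) ⊆ unreplenished D t ((window D t τ).max' h) := by
  set j := (window D t τ).max' h
  intro i hi
  obtain ⟨hij, hiW⟩ := mem_erase.mp hi
  have hiτ : τ - D < t i := (mem_filter.mp hiW).2.1
  have hjτ : t j ≤ τ := (mem_filter.mp (max'_mem _ h)).2.2
  exact mem_filter.mpr ⟨mem_univ i, lt_of_le_of_ne (le_max' _ i hiW) hij, by linarith⟩

theorem sum_window_le_of_credit {s : ι → ℝ} {σ : ℝ} (hσ : 0 ≤ σ) (hs : ∀ i, 0 ≤ s i)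
    (hcredit : ∀ j, s j + ∑ i ∈ unreplenished D t j, s i ≤ σ) (τ : ℝ) :
    ∑ j ∈ window D t τ, s j ≤ σ := by
  rcases (window D t τ).eq_empty_or_nonempty with h | h
  · simpa [h] using hσ
  set j := (window D t τ).max' h
  calc ∑ i ∈ window D t τ, s i
      = s j + ∑ i ∈ (window D t τ).erase j, s i := (add_sum_erase _ s (max'_mem _ h)).symm
    _ ≤ s j + ∑ i ∈ unreplenished D t j, s i := by
        gcongr
        · exact fun i _ _ => hs i
        · exact erase_max'_window_subset_unreplenished D t h
    _ ≤ σ := hcredit j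

end QuantumShaper

open Finset in
theorem quantum_shaper_window_bound_general
    (σ D : ℝ) (hσ : 0 < σ)
    (n : ℕ) (t s : Fin n → ℝ)
    (hpos : ∀ j : Fin n, 0 < s j)
    (hcredit : ∀ j : Fin n,
      s j + ∑ i ∈ Finset.univ.filter (fun i : Fin n => i < j ∧ t j - D < t i),
        s i ≤ σ) :
    ∀ τ : ℝ,
      ∑ j ∈ Finset.univ.filter (fun j : Fin n => τ - D < t j ∧ t j ≤ τ), s j
        ≤ σ :=
  QuantumShaper.sum_window_le_of_credit D t hσ.le (fun i => (hpos i).le) hcredit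

open Finset in
/-- The defining guarantee of the paper's Quantum shaper: if release events
`(t j, s j)` obey the credit rule (the released size plus all sizes consumed
and not yet replenished within the last `D` time units never exceeds `σ`),
then the total bits released in any window of length `D` is at most `σ`. -/
theorem quantum_shaper_window_bound
    (σ D : ℝ) (hσ : 0 < σ) (hD : 0 < D)
    (n : ℕ) (t s : Fin n → ℝ)
    (hmono : ∀ i j : Fin n, i ≤ j → t i ≤ t j)
    (hpos : ∀ j : Fin n, 0 < s j)
    (hcredit : ∀ j : Fin n,
      s j + ∑ i ∈ Finset.univ.filter (fun i : Fin n => i < j ∧ t j - D < t i),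
        s i ≤ σ) :
    ∀ τ : ℝ,
      ∑ j ∈ Finset.univ.filter (fun j : Fin n => τ - D < t j ∧ t j ≤ τ), s j
        ≤ σ :=
  quantum_shaper_window_bound_general σ D hσ n t s hpos hcredit
end
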